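/- For real parameters θ¹, θ² with θ¹+θ² > 0 and θ¹−θ² > 0, the variance of log(sech X) under the beta-logistic distribution is ∫_{ℝ} (log(sech x) − m)² · p(x;θ¹,θ²) dx = (1/4)ψ'((θ¹+θ²)/2) + (1/4)ψ'((θ¹−θ²)/2) − ψ'(θ¹), where m = (1/2)ψ((θ¹−θ²)/2) + (1/2)ψ((θ¹+θ²)/2) − ψ(θ¹) + log 2. This is the (1,1) entry g₁₁ of the Fisher information matrix of the family. -/

import Mathlib

/-!
With `X = log ∘ sech` and base measure `e^{θ² x} dx`, the beta-logistic law is the exponential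
tilt of the base measure by `θ¹ X`, so the variance of `X` is the second derivative at `θ¹` of the
cumulant generating function `t ↦ log ∫ sech(x)^t e^{θ² x} dx`, and `m` is its first derivative.
The substitution `u = σ(2x)` (`σ` the logistic sigmoid) turns that integral into a Beta integral,
`∫ sech(x)^t e^{θ² x} dx = 2^{t-1} Γ((t-θ²)/2) Γ((t+θ²)/2) / Γ(t)`, whose logarithm is
differentiated twice with `ψ = (log Γ)'` and `ψ' = (log Γ)''`.
-/

open MeasureTheory

/-- The hyperbolic secant function: `sech x = 2 / (eˣ + e⁻ˣ)`. -/
noncomputable def sech (x : ℝ) : ℝ := 1 / Real.cosh x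

/-- The beta-logistic density. -/
noncomputable def betaLogisticPDF (θ1 θ2 x : ℝ) : ℝ :=
  (2 : ℝ) ^ (1 - θ1) * sech x ^ θ1 * Real.exp (θ2 * x) /
    (Real.Gamma ((θ1 - θ2) / 2) * Real.Gamma ((θ1 + θ2) / 2) / Real.Gamma θ1)

/-- The digamma function `ψ(z) = d/dz log Γ(z)`. -/
noncomputable def digamma (z : ℝ) : ℝ := deriv (fun x => Real.log (Real.Gamma x)) z

/-- The trigamma function `ψ'(z) = d²/dz² log Γ(z)`. -/
noncomputable def trigamma (z : ℝ) : ℝ := iteratedDeriv 2 (fun x => Real.log (Real.Gamma x)) z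

open Real Set Filter Topology ProbabilityTheory

theorem contDiff_inv_Gamma {n : WithTop ℕ∞} : ContDiff ℝ n fun x : ℝ => (Gamma x)⁻¹ := by
  have h : (fun x : ℝ => (Gamma x)⁻¹) = fun x : ℝ => ((Complex.Gamma x)⁻¹).re := by
    ext x; rw [Complex.Gamma_ofReal, ← Complex.ofReal_inv, Complex.ofReal_re]
  exact h ▸ Complex.differentiable_one_div_Gamma.contDiff.real_of_complex

theorem contDiffAt_log_Gamma {x : ℝ} (hx : Gamma x ≠ 0) :
    ContDiffAt ℝ 2 (fun x => log (Gamma x)) x := by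
  have h : (fun x => log (Gamma x)) = fun x => -log (Gamma x)⁻¹ := by
    ext x; rw [log_inv, neg_neg]
  rw [h]
  exact ((contDiffAt_log.2 (inv_ne_zero hx)).comp x contDiff_inv_Gamma.contDiffAt).neg

theorem hasDerivAt_log_Gamma {x : ℝ} (hx : Gamma x ≠ 0) :
    HasDerivAt (fun x => log (Gamma x)) (digamma x) x :=
  ((contDiffAt_log_Gamma hx).differentiableAt two_ne_zero).hasDerivAt

theorem hasDerivAt_digamma {x : ℝ} (hx : Gamma x ≠ 0) :
    HasDerivAt digamma (trigamma x) x := by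
  rw [trigamma, iteratedDeriv_succ, iteratedDeriv_one]
  exact (((contDiffAt_log_Gamma hx).derivWithin (m := 1) le_rfl).differentiableAt
    one_ne_zero).hasDerivAt

theorem sigmoid_two_mul (x : ℝ) : sigmoid (2 * x) = sech x * exp x / 2 := by
  rw [sigmoid_def, sech, cosh_eq]
  field_simp
  rw [add_mul, one_mul, ← exp_add]
  congr 2
  ring

theorem one_sub_sigmoid_two_mul (x : ℝ) : 1 - sigmoid (2 * x) = sech x * exp (-x) / 2 := by
  rw [← sigmoid_neg, ← mul_neg, sigmoid_two_mul, sech, sech, cosh_neg]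

theorem sech_pos (x : ℝ) : 0 < sech x := one_div_pos.2 (cosh_pos x)

theorem continuous_sech : Continuous sech :=
  continuous_const.div continuous_cosh fun x => (cosh_pos x).ne'

theorem exp_mul_log_sech (t x : ℝ) : exp (t * log (sech x)) = sech x ^ t := by
  rw [rpow_def_of_pos (sech_pos x), mul_comm]

theorem log_sech_le (x : ℝ) : log (sech x) ≤ log 2 - |x| := by
  have h : exp |x| / 2 ≤ cosh x := by
    rw [← cosh_abs, cosh_eq]; linarith [exp_pos (-|x|)]
  have := log_le_log (by positivity) h
  rw [log_div (exp_pos _).ne' two_ne_zero, log_exp] at this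
  rw [sech, one_div, log_inv]
  linarith

theorem integrable_exp_neg_mul_abs {c : ℝ} (hc : 0 < c) :
    Integrable fun x : ℝ => exp (-(c * |x|)) := by
  rw [← integrableOn_univ, ← Iic_union_Ioi (a := 0)]
  refine ((integrableOn_exp_mul_Iic hc 0).congr_fun (fun x hx => ?_) measurableSet_Iic).union
    ((integrableOn_exp_mul_Ioi (neg_neg_of_pos hc) 0).congr_fun (fun x hx => ?_) measurableSet_Ioi)
  · rw [abs_of_nonpos hx]; ring_nf
  · rw [abs_of_pos hx]; ring_nf

theorem integral_rpow_mul_one_sub_rpow {p q : ℝ} (hp : 0 < p) (hq : 0 < q) :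
    ∫ u in Ioo (0 : ℝ) 1, u ^ (p - 1) * (1 - u) ^ (q - 1) = Gamma p * Gamma q / Gamma (p + q) := by
  have hcplx := Complex.Gamma_mul_Gamma_eq_betaIntegral (s := (p : ℂ)) (t := (q : ℂ))
    (by simpa using hp) (by simpa using hq)
  have hbeta : Complex.betaIntegral p q =
      ((∫ u in (0 : ℝ)..1, u ^ (p - 1) * (1 - u) ^ (q - 1) : ℝ) : ℂ) := by
    rw [Complex.betaIntegral, ← intervalIntegral.integral_ofReal]
    refine intervalIntegral.integral_congr fun u hu => ?_
    rw [uIcc_of_le zero_le_one] at hu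
    push_cast
    rw [Complex.ofReal_cpow hu.1, Complex.ofReal_cpow (sub_nonneg.2 hu.2)]
    push_cast
    ring
  rw [hbeta, ← Complex.ofReal_add, Complex.Gamma_ofReal, Complex.Gamma_ofReal,
    Complex.Gamma_ofReal, ← Complex.ofReal_mul, ← Complex.ofReal_mul, Complex.ofReal_inj,
    intervalIntegral.integral_of_le zero_le_one, integral_Ioc_eq_integral_Ioo] at hcplx
  rw [hcplx, mul_div_cancel_left₀ _ (Gamma_pos_of_pos (add_pos hp hq)).ne']

theorem abs_deriv_smul_beta_sigmoid_two_mul (a b x : ℝ) :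
    |sigmoid (2 * x) * (1 - sigmoid (2 * x)) * 2| •
        (sigmoid (2 * x) ^ ((a + b) / 2 - 1) * (1 - sigmoid (2 * x)) ^ ((a - b) / 2 - 1)) =
      2 ^ (1 - a) * (sech x ^ a * exp (b * x)) := by
  have hs := sigmoid_pos (2 * x)
  have hs' : 0 < 1 - sigmoid (2 * x) := sub_pos.2 (sigmoid_lt_one _)
  have hx := sech_pos x
  rw [abs_of_pos (by positivity), smul_eq_mul]
  calc sigmoid (2 * x) * (1 - sigmoid (2 * x)) * 2 *
        (sigmoid (2 * x) ^ ((a + b) / 2 - 1) * (1 - sigmoid (2 * x)) ^ ((a - b) / 2 - 1))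
      = 2 * (sigmoid (2 * x) ^ ((a + b) / 2) * (1 - sigmoid (2 * x)) ^ ((a - b) / 2)) := by
        rw [rpow_sub_one hs.ne', rpow_sub_one hs'.ne']
        field_simp
    _ = 2 * ((sech x / 2) ^ ((a + b) / 2 + (a - b) / 2) * exp (b * x)) := by
        rw [one_sub_sigmoid_two_mul, sigmoid_two_mul, mul_div_right_comm, mul_div_right_comm,
          mul_rpow (by positivity) (exp_pos _).le, mul_rpow (by positivity) (exp_pos _).le,
          ← exp_mul, ← exp_mul, rpow_add (by positivity)]
        have : b * x = x * ((a + b) / 2) + -x * ((a - b) / 2) := by ring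
        rw [this, exp_add]
        ring
    _ = 2 ^ (1 - a) * (sech x ^ a * exp (b * x)) := by
        rw [show (a + b) / 2 + (a - b) / 2 = a by ring, div_rpow hx.le zero_le_two,
          rpow_sub two_pos, rpow_one]
        ring

theorem integral_sech_rpow_mul_exp {a b : ℝ} (h : |b| < a) :
    ∫ x, sech x ^ a * exp (b * x) =
      2 ^ (a - 1) * (Gamma ((a - b) / 2) * Gamma ((a + b) / 2) / Gamma a) := by
  obtain ⟨hb₁, hb₂⟩ := abs_lt.1 h
  have hφ : ∀ x : ℝ, HasDerivAt (fun x => sigmoid (2 * x))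
      (sigmoid (2 * x) * (1 - sigmoid (2 * x)) * 2) x := fun x => by
    simpa [Function.comp_def] using
      (hasDerivAt_sigmoid (2 * x)).comp x ((hasDerivAt_id' x).const_mul (2 : ℝ))
  have himage : (fun x : ℝ => sigmoid (2 * x)) '' univ = Ioo 0 1 := by
    rw [image_univ, ← range_sigmoid]
    exact (mul_left_surjective₀ two_ne_zero).range_comp sigmoid
  have hinj : InjOn (fun x : ℝ => sigmoid (2 * x)) univ :=
    (sigmoid_injective.comp (mul_right_injective₀ two_ne_zero)).injOn
  have hchange := integral_image_eq_integral_abs_deriv_smul MeasurableSet.univ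
    (fun x _ => (hφ x).hasDerivWithinAt) hinj
    (fun u => u ^ ((a + b) / 2 - 1) * (1 - u) ^ ((a - b) / 2 - 1))
  simp only [himage, setIntegral_univ, abs_deriv_smul_beta_sigmoid_two_mul,
    integral_const_mul] at hchange
  rw [integral_rpow_mul_one_sub_rpow (by linarith) (by linarith),
    show (a + b) / 2 + (a - b) / 2 = a by ring] at hchange
  rw [mul_comm (Gamma ((a - b) / 2)), hchange, ← mul_assoc, ← rpow_add two_pos]
  norm_num

noncomputable def betaLogisticBase (b : ℝ) : Measure ℝ :=
  volume.withDensity fun x => ENNReal.ofReal (exp (b * x))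

section betaLogisticBase

variable {b t : ℝ}

theorem integral_betaLogisticBase (f : ℝ → ℝ) :
    ∫ x, f x ∂betaLogisticBase b = ∫ x, exp (b * x) * f x := by
  rw [betaLogisticBase, integral_withDensity_eq_integral_toReal_smul (by fun_prop)
    (ae_of_all _ fun _ => ENNReal.ofReal_lt_top)]
  simp only [ENNReal.toReal_ofReal (exp_pos _).le, smul_eq_mul]

theorem integrable_betaLogisticBase_iff {f : ℝ → ℝ} :
    Integrable f (betaLogisticBase b) ↔ Integrable fun x => exp (b * x) * f x := by
  rw [betaLogisticBase, integrable_withDensity_iff_integrable_smul' (by fun_prop)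
    (ae_of_all _ fun _ => ENNReal.ofReal_lt_top)]
  simp only [ENNReal.toReal_ofReal (exp_pos _).le, smul_eq_mul]

theorem Ioi_subset_integrableExpSet_log_sech :
    Ioi |b| ⊆ integrableExpSet (fun x => log (sech x)) (betaLogisticBase b) := by
  intro t (ht : |b| < t)
  change Integrable _ _
  rw [integrable_betaLogisticBase_iff]
  have hcont : Continuous fun x => exp (b * x) * exp (t * log (sech x)) := by
    have := continuous_sech.log fun x => (sech_pos x).ne'
    fun_prop
  refine Integrable.mono' ((integrable_exp_neg_mul_abs (sub_pos.2 ht)).const_mul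
    (exp (t * log 2))) hcont.aestronglyMeasurable (ae_of_all _ fun x => ?_)
  rw [Real.norm_of_nonneg (by positivity), ← exp_add, ← exp_add]
  refine exp_le_exp.2 ?_
  have h₁ : b * x ≤ |b| * |x| := (le_abs_self _).trans (abs_mul b x).le
  have h₂ := mul_le_mul_of_nonneg_left (log_sech_le x) ((abs_nonneg b).trans ht.le)
  linarith

theorem mgf_log_sech :
    mgf (fun x => log (sech x)) (betaLogisticBase b) t = ∫ x, sech x ^ t * exp (b * x) := by
  simp only [mgf, integral_betaLogisticBase, exp_mul_log_sech, mul_comm]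

end betaLogisticBase

noncomputable def logPartition (b t : ℝ) : ℝ :=
  (t - 1) * log 2 + log (Gamma ((t - b) / 2)) + log (Gamma ((t + b) / 2)) - log (Gamma t)

section logPartition

variable {b t : ℝ}

theorem Gamma_pos_of_abs_lt (h : |b| < t) :
    0 < Gamma t ∧ 0 < Gamma ((t - b) / 2) ∧ 0 < Gamma ((t + b) / 2) := by
  obtain ⟨h₁, h₂⟩ := abs_lt.1 h
  exact ⟨Gamma_pos_of_pos (by linarith), Gamma_pos_of_pos (by linarith),
    Gamma_pos_of_pos (by linarith)⟩

theorem cgf_log_sech (h : |b| < t) :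
    cgf (fun x => log (sech x)) (betaLogisticBase b) t = logPartition b t := by
  obtain ⟨hΓ, hΓ₁, hΓ₂⟩ := Gamma_pos_of_abs_lt h
  rw [cgf, mgf_log_sech, integral_sech_rpow_mul_exp h, log_mul (by positivity) (by positivity),
    log_div (by positivity) hΓ.ne', log_mul hΓ₁.ne' hΓ₂.ne', log_rpow two_pos, logPartition]
  ring

theorem hasDerivAt_half_sub {f : ℝ → ℝ} {f' : ℝ} (hf : HasDerivAt f f' ((t - b) / 2)) :
    HasDerivAt (fun s => f ((s - b) / 2)) (f' / 2) t := by
  simpa [Function.comp_def, div_eq_mul_inv] using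
    hf.comp t (((hasDerivAt_id' t).sub_const b).div_const 2)

theorem hasDerivAt_half_add {f : ℝ → ℝ} {f' : ℝ} (hf : HasDerivAt f f' ((t + b) / 2)) :
    HasDerivAt (fun s => f ((s + b) / 2)) (f' / 2) t := by
  simpa [Function.comp_def, div_eq_mul_inv] using
    hf.comp t (((hasDerivAt_id' t).add_const b).div_const 2)

theorem hasDerivAt_logPartition (h : |b| < t) :
    HasDerivAt (logPartition b)
      ((1 / 2) * digamma ((t - b) / 2) + (1 / 2) * digamma ((t + b) / 2) - digamma t + log 2)
      t := by
  obtain ⟨hΓ, hΓ₁, hΓ₂⟩ := Gamma_pos_of_abs_lt h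
  have := ((((hasDerivAt_id t).sub_const 1).mul_const (log 2)).add
    (hasDerivAt_half_sub (hasDerivAt_log_Gamma hΓ₁.ne'))).add
    (hasDerivAt_half_add (hasDerivAt_log_Gamma hΓ₂.ne')) |>.sub (hasDerivAt_log_Gamma hΓ.ne')
  exact this.congr_deriv (by ring)

theorem iteratedDeriv_two_logPartition (h : |b| < t) :
    iteratedDeriv 2 (logPartition b) t =
      (1 / 4) * trigamma ((t + b) / 2) + (1 / 4) * trigamma ((t - b) / 2) - trigamma t := by
  obtain ⟨hΓ, hΓ₁, hΓ₂⟩ := Gamma_pos_of_abs_lt h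
  have hderiv : deriv (logPartition b) =ᶠ[𝓝 t] fun s =>
      (1 / 2) * digamma ((s - b) / 2) + (1 / 2) * digamma ((s + b) / 2) - digamma s + log 2 :=
    eventually_of_mem (Ioi_mem_nhds h) fun s hs => (hasDerivAt_logPartition hs).deriv
  have := ((((hasDerivAt_half_sub (hasDerivAt_digamma hΓ₁.ne')).const_mul (1 / 2)).add
    ((hasDerivAt_half_add (hasDerivAt_digamma hΓ₂.ne')).const_mul (1 / 2))).sub
    (hasDerivAt_digamma hΓ.ne')).add_const (log 2)
  rw [iteratedDeriv_succ, iteratedDeriv_one, hderiv.deriv_eq]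
  exact this.deriv.trans (by ring)

end logPartition

theorem betaLogisticPDF_eq {θ1 θ2 : ℝ} (h : |θ2| < θ1) (x : ℝ) :
    betaLogisticPDF θ1 θ2 x = sech x ^ θ1 * exp (θ2 * x) / ∫ y, sech y ^ θ1 * exp (θ2 * y) := by
  rw [integral_sech_rpow_mul_exp h, betaLogisticPDF, show 1 - θ1 = -(θ1 - 1) by ring,
    rpow_neg zero_le_two]
  field_simp

/-- The variance of `log(sech X)` under the beta-logistic distribution is
`(1/4)ψ'((θ¹+θ²)/2) + (1/4)ψ'((θ¹−θ²)/2) − ψ'(θ¹)`, where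
`m = (1/2)ψ((θ¹−θ²)/2) + (1/2)ψ((θ¹+θ²)/2) − ψ(θ¹) + log 2`.
This is the Fisher metric entry `g₁₁`. -/
theorem betaLogistic_variance_log_sech (θ1 θ2 m : ℝ) (h1 : 0 < θ1 + θ2) (h2 : 0 < θ1 - θ2)
    (hm : m = (1 / 2) * digamma ((θ1 - θ2) / 2) + (1 / 2) * digamma ((θ1 + θ2) / 2) -
      digamma θ1 + Real.log 2) :
    (∫ x : ℝ, (Real.log (sech x) - m) ^ 2 * betaLogisticPDF θ1 θ2 x) =
      (1 / 4) * trigamma ((θ1 + θ2) / 2) + (1 / 4) * trigamma ((θ1 - θ2) / 2) -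
        trigamma θ1 := by
  have hθ : |θ2| < θ1 := abs_lt.2 ⟨by linarith, by linarith⟩
  have hcgf : cgf (fun x => log (sech x)) (betaLogisticBase θ2) =ᶠ[𝓝 θ1] logPartition θ2 :=
    eventually_of_mem (Ioi_mem_nhds hθ) fun t ht => cgf_log_sech ht
  have hmean : deriv (cgf (fun x => log (sech x)) (betaLogisticBase θ2)) θ1 = m := by
    rw [hcgf.deriv_eq, (hasDerivAt_logPartition hθ).deriv, hm]
  have hvar := iteratedDeriv_two_cgf_eq_integral
    (interior_maximal Ioi_subset_integrableExpSet_log_sech isOpen_Ioi hθ)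
  rw [hcgf.iteratedDeriv_eq, iteratedDeriv_two_logPartition hθ, hmean, mgf_log_sech,
    integral_betaLogisticBase, ← integral_div] at hvar
  rw [hvar]
  congr 1 with x
  rw [betaLogisticPDF_eq hθ, exp_mul_log_sech]
  ring
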